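/- For every positive integer m, the number of reverse alternating permutations of [2m-1] with exactly m fixed points equals D_{m-1}, the number of derangements of [m-1]. -/
import Mathlib


/-- `π` is an alternating permutation: `π 1 > π 2 < π 3 > π 4 < ⋯`
(here stated with 0-indexed positions). -/
def IsAlternating {n : ℕ} (π : Equiv.Perm (Fin n)) : Prop :=
  ∀ i : ℕ, ∀ h : i + 1 < n,
    if i % 2 = 0 then π ⟨i + 1, h⟩ < π ⟨i, Nat.lt_of_succ_lt h⟩
    else π ⟨i, Nat.lt_of_succ_lt h⟩ < π ⟨i + 1, h⟩

/-- `π` is a reverse alternating permutation: `π 1 < π 2 > π 3 < π 4 > ⋯`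
(here stated with 0-indexed positions). -/
def IsRevAlternating {n : ℕ} (π : Equiv.Perm (Fin n)) : Prop :=
  ∀ i : ℕ, ∀ h : i + 1 < n,
    if i % 2 = 0 then π ⟨i, Nat.lt_of_succ_lt h⟩ < π ⟨i + 1, h⟩
    else π ⟨i + 1, h⟩ < π ⟨i, Nat.lt_of_succ_lt h⟩

/-- The number of fixed points of a permutation of `Fin n`. -/
def fixedPointCount {n : ℕ} (π : Equiv.Perm (Fin n)) : ℕ :=
  (Finset.univ.filter fun i => π i = i).card

open Equiv

variable {M : ℕ}

def pfun (σ : Perm (Fin M)) (j : Fin M) : Fin (2 * M + 1) :=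
  ⟨if (j : ℕ) < (σ j : ℕ) then 2 * (j:ℕ) + 1 else 2 * (j:ℕ) + 2, by
    have := j.isLt; split <;> omega⟩

lemma pfun_val (σ : Perm (Fin M)) (j : Fin M) :
    (pfun σ j : ℕ) = if (j : ℕ) < (σ j : ℕ) then 2 * (j:ℕ) + 1 else 2 * (j:ℕ) + 2 := rfl

lemma pfun_bounds (σ : Perm (Fin M)) (j : Fin M) :
    2 * (j : ℕ) + 1 ≤ (pfun σ j : ℕ) ∧ (pfun σ j : ℕ) ≤ 2 * j + 2 := by
  rw [pfun_val]; split <;> omega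

lemma pfun_inj (σ : Perm (Fin M)) : Function.Injective (pfun σ) := by
  intro a b h
  have h' := congrArg Fin.val h
  rw [pfun_val, pfun_val] at h'
  ext
  split at h' <;> split at h' <;> omega

noncomputable def Fperm (σ : Perm (Fin M)) : Perm (Fin (2 * M + 1)) :=
  σ.extendDomain (Equiv.ofInjective _ (pfun_inj σ))

lemma Fperm_apply_p (σ : Perm (Fin M)) (j : Fin M) :
    Fperm σ (pfun σ j) = pfun σ (σ j) := by
  have := Equiv.Perm.extendDomain_apply_image σ (Equiv.ofInjective _ (pfun_inj σ)) j
  simpa [Fperm, Equiv.ofInjective_apply] using this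

lemma Fperm_apply_notin (σ : Perm (Fin M)) {x : Fin (2 * M + 1)}
    (hx : x ∉ Set.range (pfun σ)) : Fperm σ x = x := by
  exact Equiv.Perm.extendDomain_apply_not_subtype _ _ hx

lemma Fperm_le_even (σ : Perm (Fin M)) (x : Fin (2 * M + 1)) (hx : (x : ℕ) % 2 = 0) :
    (Fperm σ x : ℕ) ≤ x := by
  by_cases hr : x ∈ Set.range (pfun σ)
  · obtain ⟨j, rfl⟩ := hr
    rw [Fperm_apply_p]
    have b2 := pfun_bounds σ (σ j)
    have hv := pfun_val σ j
    split at hv <;> omega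
  · rw [Fperm_apply_notin σ hr]

lemma Fperm_ge_odd (σ : Perm (Fin M)) (x : Fin (2 * M + 1)) (hx : (x : ℕ) % 2 = 1) :
    (x : ℕ) ≤ Fperm σ x := by
  by_cases hr : x ∈ Set.range (pfun σ)
  · obtain ⟨j, rfl⟩ := hr
    rw [Fperm_apply_p]
    have b2 := pfun_bounds σ (σ j)
    have hv := pfun_val σ j
    split at hv <;> omega
  · rw [Fperm_apply_notin σ hr]

lemma Fperm_pair_lt (σ : Perm (Fin M)) (jv : ℕ) (hjv : jv < M)
    (hc : jv < (σ ⟨jv, hjv⟩ : ℕ))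
    (h1 : 2 * jv + 1 < 2 * M + 1) (h2 : 2 * jv + 2 < 2 * M + 1) :
    (Fperm σ ⟨2 * jv + 1, h1⟩ : ℕ) = (pfun σ (σ ⟨jv, hjv⟩) : ℕ) ∧
      (Fperm σ ⟨2 * jv + 2, h2⟩ : ℕ) = 2 * jv + 2 := by
  have hpj : pfun σ ⟨jv, hjv⟩ = ⟨2 * jv + 1, h1⟩ := by
    apply Fin.ext
    rw [pfun_val, if_pos hc]
  constructor
  · rw [← hpj, Fperm_apply_p]
  · rw [Fperm_apply_notin]
    rintro ⟨j', hj'⟩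
    have hb := pfun_bounds σ j'
    have hv := congrArg Fin.val hj'
    simp only [Fin.val_mk] at hv
    have hj'v := j'.isLt
    have : j' = ⟨jv, hjv⟩ := by apply Fin.ext; simp only [Fin.val_mk]; omega
    subst this
    rw [pfun_val, if_pos hc] at hv
    omega

lemma Fperm_pair_gt (σ : Perm (Fin M)) (jv : ℕ) (hjv : jv < M)
    (hc : (σ ⟨jv, hjv⟩ : ℕ) < jv)
    (h1 : 2 * jv + 1 < 2 * M + 1) (h2 : 2 * jv + 2 < 2 * M + 1) :
    (Fperm σ ⟨2 * jv + 1, h1⟩ : ℕ) = 2 * jv + 1 ∧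
      (Fperm σ ⟨2 * jv + 2, h2⟩ : ℕ) = (pfun σ (σ ⟨jv, hjv⟩) : ℕ) := by
  have hpj : pfun σ ⟨jv, hjv⟩ = ⟨2 * jv + 2, h2⟩ := by
    apply Fin.ext
    rw [pfun_val, if_neg (by simp only [Fin.val_mk]; omega)]
  constructor
  · rw [Fperm_apply_notin]
    rintro ⟨j', hj'⟩
    have hb := pfun_bounds σ j'
    have hv := congrArg Fin.val hj'
    simp only [Fin.val_mk] at hv
    have hj'v := j'.isLt
    have : j' = ⟨jv, hjv⟩ := by apply Fin.ext; simp only [Fin.val_mk]; omega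
    subst this
    rw [pfun_val, if_neg (by simp only [Fin.val_mk]; omega)] at hv
    omega
  · rw [← hpj, Fperm_apply_p]

lemma Fperm_revAlt (σ : Perm (Fin M)) (hσ : ∀ k, σ k ≠ k) :
    IsRevAlternating (Fperm σ) := by
  intro i h
  split
  case isTrue hpar =>
    rw [Fin.lt_def]
    have h1 := Fperm_le_even σ ⟨i, Nat.lt_of_succ_lt h⟩ (by simpa using hpar)
    have h2 := Fperm_ge_odd σ ⟨i + 1, h⟩ (by simp; omega)
    simp only at h1 h2
    omega
  case isFalse hpar =>
    rw [Fin.lt_def]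
    obtain ⟨jv, hjv, rfl⟩ : ∃ jv, jv < M ∧ i = 2 * jv + 1 := ⟨i / 2, by omega, by omega⟩
    have p2 : 2 * jv + 2 < 2 * M + 1 := by omega
    have e2 : (⟨2 * jv + 1 + 1, h⟩ : Fin (2 * M + 1)) = ⟨2 * jv + 2, p2⟩ := rfl
    rw [e2]
    have hne : jv ≠ (σ ⟨jv, hjv⟩ : ℕ) := fun hh => hσ ⟨jv, hjv⟩ (Fin.ext hh.symm)
    have hb := pfun_bounds σ (σ ⟨jv, hjv⟩)
    rcases Nat.lt_or_ge jv (σ ⟨jv, hjv⟩ : ℕ) with hc | hc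
    · obtain ⟨q1, q2⟩ := Fperm_pair_lt σ jv hjv hc (Nat.lt_of_succ_lt h) p2
      omega
    · obtain ⟨q1, q2⟩ := Fperm_pair_gt σ jv hjv (by omega) (Nat.lt_of_succ_lt h) p2
      omega

lemma Fperm_fixed_iff (σ : Perm (Fin M)) (hσ : ∀ k, σ k ≠ k) (x : Fin (2 * M + 1)) :
    Fperm σ x = x ↔ x ∉ Set.range (pfun σ) := by
  constructor
  · rintro hfix ⟨j, rfl⟩
    rw [Fperm_apply_p] at hfix
    exact hσ j (pfun_inj σ hfix)
  · exact Fperm_apply_notin σ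

lemma Fperm_fixedCount (σ : Perm (Fin M)) (hσ : ∀ k, σ k ≠ k) :
    fixedPointCount (Fperm σ) = M + 1 := by
  classical
  unfold fixedPointCount
  have hset : (Finset.univ.filter fun x => Fperm σ x = x) =
      Finset.univ \ (Finset.univ.filter fun x => x ∈ Set.range (pfun σ)) := by
    ext x
    simp [Fperm_fixed_iff σ hσ x]
  rw [hset, Finset.card_sdiff_of_subset (Finset.filter_subset _ _)]
  have himg : (Finset.univ.filter fun x => x ∈ Set.range (pfun σ)) =
      Finset.univ.image (pfun σ) := by
    ext x
    simp [Set.mem_range, eq_comm]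
  rw [himg, Finset.card_image_of_injective _ (pfun_inj σ)]
  simp
  omega

lemma Fperm_injective (σ σ' : Perm (Fin M)) (hσ : ∀ k, σ k ≠ k) (hσ' : ∀ k, σ' k ≠ k)
    (h : Fperm σ = Fperm σ') : σ = σ' := by
  have hcond : ∀ j : Fin M, ((j : ℕ) < σ j ↔ (j : ℕ) < σ' j) := by
    intro j
    have hj := j.isLt
    have hx : 2 * (j : ℕ) + 1 < 2 * M + 1 := by omega
    set x : Fin (2 * M + 1) := ⟨2 * (j : ℕ) + 1, hx⟩ with hxdef
    have key : ∀ τ : Perm (Fin M), (∀ k, τ k ≠ k) →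
        (x ∈ Set.range (pfun τ) ↔ (j : ℕ) < τ j) := by
      intro τ hτ
      constructor
      · rintro ⟨j', hj'⟩
        have hb := pfun_bounds τ j'
        have hv := congrArg Fin.val hj'
        simp only [hxdef, Fin.val_mk] at hv
        have : j' = j := by apply Fin.ext; omega
        subst this
        rw [pfun_val] at hv
        split at hv
        · assumption
        · omega
      · intro hc
        refine ⟨j, Fin.ext ?_⟩
        rw [pfun_val, if_pos hc]
    have e1 := (Fperm_fixed_iff σ hσ x).symm
    have e2 := (Fperm_fixed_iff σ' hσ' x).symm
    rw [key σ hσ] at e1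
    rw [key σ' hσ'] at e2
    rw [← not_iff_not] at e1 e2
    simp only [not_not] at e1 e2
    rw [e1, e2, h]
  have hp : pfun σ = pfun σ' := by
    funext j
    apply Fin.ext
    rw [pfun_val, pfun_val]
    by_cases hc : (j : ℕ) < σ j
    · rw [if_pos hc, if_pos ((hcond j).mp hc)]
    · rw [if_neg hc, if_neg (fun hh => hc ((hcond j).mpr hh))]
  apply Equiv.ext
  intro j
  apply pfun_inj σ
  calc pfun σ (σ j) = Fperm σ (pfun σ j) := (Fperm_apply_p σ j).symm
    _ = Fperm σ' (pfun σ' j) := by rw [h, hp]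
    _ = pfun σ' (σ' j) := Fperm_apply_p σ' j
    _ = pfun σ (σ' j) := by rw [hp]

lemma Fperm_surj_aux (π : Perm (Fin (2 * M + 1))) (hA : IsRevAlternating π)
    (hC : fixedPointCount π = M + 1) :
    ∃ σ : Perm (Fin M), (∀ k, σ k ≠ k) ∧ Fperm σ = π := by
  classical
  set A : ℕ → ℕ := fun x => if h : x < 2 * M + 1 then (π ⟨x, h⟩ : ℕ) else 0 with hAdef
  have hAval : ∀ (x : ℕ) (h : x < 2 * M + 1), A x = (π ⟨x, h⟩ : ℕ) := fun x h => dif_pos h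
  have hAlt : ∀ x, x < 2 * M + 1 → A x < 2 * M + 1 := by
    intro x h; rw [hAval x h]; exact (π ⟨x, h⟩).isLt
  have hA' : ∀ i, i % 2 = 1 → ∀ h : i + 1 < 2 * M + 1, A (i + 1) < A i := by
    intro i hpar h
    rw [hAval (i + 1) h, hAval i (Nat.lt_of_succ_lt h)]
    have := hA i h
    rw [if_neg (by omega)] at this
    exact this
  have hinj2 : ∀ a b, a < 2 * M + 1 → b < 2 * M + 1 → A a = A b → a = b := by
    intro a b ha hb he
    rw [hAval a ha, hAval b hb] at he
    have := π.injective (Fin.ext he)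
    exact congrArg Fin.val this
  -- S1 : pair not both fixed
  have S1 : ∀ jv, jv < M → ¬(A (2 * jv + 1) = 2 * jv + 1 ∧ A (2 * jv + 2) = 2 * jv + 2) := by
    rintro jv hjv ⟨h1, h2⟩
    have hd := hA' (2 * jv + 1) (by omega) (by omega)
    have e : A (2 * jv + 1 + 1) = A (2 * jv + 2) := rfl
    omega
  -- counting
  have hfixA : ∀ x : Fin (2 * M + 1), π x = x ↔ A (x : ℕ) = (x : ℕ) := by
    intro x
    rw [hAval (x : ℕ) x.isLt]
    constructor
    · intro e
      have : π ⟨(x : ℕ), x.isLt⟩ = π x := rfl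
      rw [this, e]
    · intro e
      have e2 : π ⟨(x : ℕ), x.isLt⟩ = x := Fin.ext e
      exact e2
  have hsurj : ∀ t : Fin (M + 1), ∃ x ∈ Finset.univ.filter (fun x => π x = x),
      (((x : ℕ) + 1) / 2) = (t : ℕ) := by
    have hio : Set.InjOn (fun x : Fin (2 * M + 1) => (⟨((x : ℕ) + 1) / 2, by have := x.isLt; omega⟩ : Fin (M + 1)))
        (Finset.univ.filter (fun x => π x = x)) := by
      intro x hx y hy hg
      simp only [Finset.coe_filter, Set.mem_setOf_eq] at hx hy
      have hgv : ((x : ℕ) + 1) / 2 = ((y : ℕ) + 1) / 2 := congrArg Fin.val hg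
      by_contra hne
      have hnev : (x : ℕ) ≠ (y : ℕ) := fun hh => hne (Fin.ext hh)
      have hxl := x.isLt
      have hyl := y.isLt
      obtain ⟨jv, hjv, hcase⟩ : ∃ jv, jv < M ∧
          (((x : ℕ) = 2 * jv + 1 ∧ (y : ℕ) = 2 * jv + 2) ∨
           ((x : ℕ) = 2 * jv + 2 ∧ (y : ℕ) = 2 * jv + 1)) :=
        ⟨((x : ℕ) + 1) / 2 - 1, by omega, by omega⟩
      have hx' := (hfixA x).mp hx.2
      have hy' := (hfixA y).mp hy.2
      refine S1 jv hjv ?_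
      rcases hcase with ⟨e1, e2⟩ | ⟨e1, e2⟩
      · rw [e1] at hx'; rw [e2] at hy'; exact ⟨hx', hy'⟩
      · rw [e1] at hx'; rw [e2] at hy'; exact ⟨hy', hx'⟩
    have himg : (Finset.univ.filter (fun x => π x = x)).image
        (fun x : Fin (2 * M + 1) => (⟨((x : ℕ) + 1) / 2, by have := x.isLt; omega⟩ : Fin (M + 1))) = Finset.univ := by
      apply Finset.eq_univ_of_card
      rw [Finset.card_image_of_injOn hio]
      rw [fixedPointCount] at hC
      rw [hC, Fintype.card_fin]
    intro t
    have : t ∈ (Finset.univ.filter (fun x => π x = x)).image _ := himg ▸ Finset.mem_univ t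
    obtain ⟨x, hx, he⟩ := Finset.mem_image.mp this
    exact ⟨x, hx, congrArg Fin.val he⟩
  have h0 : A 0 = 0 := by
    obtain ⟨x, hx, he⟩ := hsurj 0
    simp only [Finset.mem_filter] at hx
    have hfx := (hfixA x).mp hx.2
    have h0v : ((0 : Fin (M + 1)) : ℕ) = 0 := rfl
    have hxv : (x : ℕ) = 0 := by omega
    rw [hxv] at hfx
    exact hfx
  have hpairE : ∀ jv, jv < M → A (2 * jv + 1) = 2 * jv + 1 ∨ A (2 * jv + 2) = 2 * jv + 2 := by
    intro jv hjv
    obtain ⟨x, hx, he⟩ := hsurj ⟨jv + 1, by omega⟩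
    simp only [Finset.mem_filter] at hx
    have hfx := (hfixA x).mp hx.2
    have hxl := x.isLt
    have : (x : ℕ) = 2 * jv + 1 ∨ (x : ℕ) = 2 * jv + 2 := by
      simp only [Fin.val_mk] at he; omega
    rcases this with e | e <;> rw [e] at hfx
    · exact Or.inl hfx
    · exact Or.inr hfx
  -- the nonfixed element of each pair
  set nfv : ℕ → ℕ := fun jv => if A (2 * jv + 1) = 2 * jv + 1 then 2 * jv + 2 else 2 * jv + 1
    with hnfvdef
  have hnfv_bounds : ∀ jv, 2 * jv + 1 ≤ nfv jv ∧ nfv jv ≤ 2 * jv + 2 := by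
    intro jv; simp only [hnfvdef]; split <;> omega
  have hnfv_nonfix : ∀ jv, jv < M → A (nfv jv) ≠ nfv jv := by
    intro jv hjv
    have := S1 jv hjv
    have hp := hpairE jv hjv
    simp only [hnfvdef]
    split
    · rename_i hc
      intro hcon; exact this ⟨hc, hcon⟩
    · rename_i hc
      intro hcon; exact hc hcon
  have hnfv_inj : ∀ jv kv, nfv jv = nfv kv → jv = kv := by
    intro jv kv he
    have h1 := hnfv_bounds jv
    have h2 := hnfv_bounds kv
    omega
  have hnonfix : ∀ x, x < 2 * M + 1 → A x ≠ x → ∃ jv, jv < M ∧ x = nfv jv := by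
    intro x hx hafx
    have hx0 : x ≠ 0 := fun e => hafx (by rw [e]; exact h0)
    refine ⟨(x - 1) / 2, by omega, ?_⟩
    have hp := hpairE ((x - 1) / 2) (by omega)
    have hxe : x = 2 * ((x - 1) / 2) + 1 ∨ x = 2 * ((x - 1) / 2) + 2 := by omega
    simp only [hnfvdef]
    rcases hxe with e | e
    · rw [if_neg (by rw [← e]; exact hafx)]; exact e
    · have h2 : A (2 * ((x - 1) / 2) + 1) = 2 * ((x - 1) / 2) + 1 := by
        rcases hp with h | h
        · exact h
        · exfalso; rw [← e] at h; exact hafx h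
      rw [if_pos h2]; exact e
  have hclosed : ∀ x, x < 2 * M + 1 → A x ≠ x → A (A x) ≠ A x := by
    intro x hx hafx hcon
    exact hafx (hinj2 (A x) x (hAlt x hx) hx hcon)
  have hstep : ∀ jv, jv < M → ∃ kv, kv < M ∧ A (nfv jv) = nfv kv ∧ kv ≠ jv := by
    intro jv hjv
    have hb := hnfv_bounds jv
    have hlt : nfv jv < 2 * M + 1 := by omega
    obtain ⟨kv, hkv, he⟩ := hnonfix (A (nfv jv)) (hAlt _ hlt) (hclosed _ hlt (hnfv_nonfix jv hjv))
    refine ⟨kv, hkv, he, fun hc => ?_⟩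
    subst hc
    exact hnfv_nonfix kv hjv he
  choose σv hσv1 hσv2 hσv3 using hstep
  have hσfinj : Function.Injective (fun j : Fin M => (⟨σv (j : ℕ) j.isLt, hσv1 _ _⟩ : Fin M)) := by
    intro a b he
    have hev : σv (a : ℕ) a.isLt = σv (b : ℕ) b.isLt := congrArg Fin.val he
    have e1 := hσv2 (a : ℕ) a.isLt
    have e2 := hσv2 (b : ℕ) b.isLt
    rw [hev] at e1
    have hba := hnfv_bounds (a : ℕ)
    have hbb := hnfv_bounds (b : ℕ)
    have hal := a.isLt
    have hbl := b.isLt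
    have : nfv (a : ℕ) = nfv (b : ℕ) :=
      hinj2 _ _ (by omega) (by omega) (by rw [e1, e2])
    exact Fin.ext (hnfv_inj _ _ this)
  set σ : Perm (Fin M) :=
    Equiv.ofBijective _ (Finite.injective_iff_bijective.mp hσfinj) with hσdef
  have hσapp : ∀ j : Fin M, (σ j : ℕ) = σv (j : ℕ) j.isLt := fun j => rfl
  have hder : ∀ k, σ k ≠ k := by
    intro k hk
    have : (σ k : ℕ) = (k : ℕ) := congrArg Fin.val hk
    rw [hσapp] at this
    exact hσv3 (k : ℕ) k.isLt this
  refine ⟨σ, hder, ?_⟩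
  -- pfun σ = nfv
  have hcond : ∀ j : Fin M, ((j : ℕ) < (σ j : ℕ) ↔ nfv (j : ℕ) = 2 * (j : ℕ) + 1) := by
    intro j
    set jv := (j : ℕ) with hjvdef
    have hjl : jv < M := j.isLt
    have hstepv := hσv2 jv j.isLt
    rw [← hσapp] at hstepv
    have hbs := hnfv_bounds (σ j : ℕ)
    have hbj := hnfv_bounds jv
    have hd := hA' (2 * jv + 1) (by omega) (by omega)
    have e : A (2 * jv + 1 + 1) = A (2 * jv + 2) := rfl
    rw [e] at hd
    by_cases hcase : A (2 * jv + 1) = 2 * jv + 1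
    · -- nfv jv = 2jv+2, fixed at odd pos
      have hn : nfv jv = 2 * jv + 2 := by simp only [hnfvdef]; rw [if_pos hcase]
      rw [hn] at hstepv
      constructor
      · intro hlt; omega
      · intro he; omega
    · have hn : nfv jv = 2 * jv + 1 := by simp only [hnfvdef]; rw [if_neg hcase]
      rw [hn] at hstepv
      have hfx2 : A (2 * jv + 2) = 2 * jv + 2 := by
        rcases hpairE jv hjl with h | h
        · exact absurd h hcase
        · exact h
      constructor
      · intro _; exact hn
      · intro _; omega
  have hpf : ∀ j : Fin M, (pfun σ j : ℕ) = nfv (j : ℕ) := by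
    intro j
    rw [pfun_val]
    have hbj := hnfv_bounds (j : ℕ)
    by_cases hc : (j : ℕ) < (σ j : ℕ)
    · rw [if_pos hc, (hcond j).mp hc]
    · rw [if_neg hc]
      have := (hcond j)
      omega
  apply Equiv.ext
  intro x
  by_cases hx : x ∈ Set.range (pfun σ)
  · obtain ⟨j, rfl⟩ := hx
    rw [Fperm_apply_p]
    apply Fin.ext
    have hbj := hnfv_bounds (j : ℕ)
    have hjl := j.isLt
    have e1 : (pfun σ (σ j) : ℕ) = nfv ((σ j : ℕ)) := hpf (σ j)
    have e2 : (pfun σ j : ℕ) = nfv (j : ℕ) := hpf j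
    have e3 : (π (pfun σ j) : ℕ) = A ((pfun σ j : ℕ)) := (hAval _ (pfun σ j).isLt).symm
    rw [e1, e3, e2]
    have := hσv2 (j : ℕ) j.isLt
    rw [← hσapp] at this
    exact this.symm
  · rw [Fperm_apply_notin σ hx]
    by_contra hne
    have hne' : π x ≠ x := fun e => hne e.symm
    have hAx : A (x : ℕ) ≠ (x : ℕ) := fun e => hne' ((hfixA x).mpr e)
    obtain ⟨jv, hjv, he⟩ := hnonfix (x : ℕ) x.isLt hAx
    apply hx
    refine ⟨⟨jv, hjv⟩, Fin.ext ?_⟩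
    rw [hpf ⟨jv, hjv⟩]
    exact he.symm
/-- For every positive integer `m`, the number of reverse alternating permutations of `[2m-1]`
with exactly `m` fixed points equals `D_{m-1}`. -/
theorem reverse_alternating_odd_count (m : ℕ) (hm : 1 ≤ m) :
    Nat.card {π : Equiv.Perm (Fin (2 * m - 1)) // IsRevAlternating π ∧ fixedPointCount π = m} =
      numDerangements (m - 1) := by
  obtain ⟨M, rfl⟩ : ∃ M, m = M + 1 := ⟨m - 1, by omega⟩
  have h1 : 2 * (M + 1) - 1 = 2 * M + 1 := by omega
  rw [h1, Nat.add_sub_cancel, ← card_derangements_fin_eq_numDerangements,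
    ← Nat.card_eq_fintype_card]
  refine (Nat.card_eq_of_bijective
    (fun σd : ↥(derangements (Fin M)) =>
      (⟨Fperm σd.1, Fperm_revAlt σd.1 σd.2, Fperm_fixedCount σd.1 σd.2⟩ :
        {π : Equiv.Perm (Fin (2 * M + 1)) // IsRevAlternating π ∧ fixedPointCount π = M + 1}))
    ⟨?_, ?_⟩).symm
  · intro a b h
    have h' : Fperm a.1 = Fperm b.1 := congrArg Subtype.val h
    exact Subtype.ext (Fperm_injective a.1 b.1 a.2 b.2 h')
  · rintro ⟨π, hA, hC⟩
    obtain ⟨σ, hder, heq⟩ := Fperm_surj_aux π hA hC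
    exact ⟨⟨σ, hder⟩, Subtype.ext heq⟩
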